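/- arXiv:2509.09394 — 2 statements merged into one kernel-verified Lean document; each statement's English description precedes it below -/
import Mathlib

section
/- Let N, n, m, q be natural numbers with n = m + q, q ≥ 1 and N > 2n − m. Let b ∈ ℝ^{q+1} and c ∈ ℝ^{m+1} be nonzero vectors and set a = c ⋆ b ∈ ℝ^{n+1}. Then the matrix T_{N−n}(a) T_{N−n}(a)ᵀ T_{N−2n+m}(b)ᵀ ∈ ℝ^{(N−n)×(N−2n+m)} has full column rank N − 2n + m. -/
/-! Write `x ∈ R^k` as the polynomial `∑ xᵢ Xⁱ` (the coefficient order is reversed with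
respect to the paper's `a(z)`, which is harmless since reversal is multiplicative). Then
`v T_k(a)` lists the coefficients of `v(X) a(X)` and `c ⋆ b` those of `c(X) b(X)`; as `R[X]`
has no zero divisors, `c ⋆ b ≠ 0` and `v ↦ v T_k(a)` is injective whenever `a ≠ 0`. Over an
ordered field `ker (A Aᵀ) = ker Aᵀ`, so `x ↦ A Aᵀ Bᵀ x` is injective once `v ↦ v A` and
`v ↦ v B` are. -/

open Matrix

/-- Banded Toeplitz matrix `T_k(a)` of a coefficient vector `a = (a_n, …, a_1, a_0)`:
entry `(i,j)` equals the coefficient `a_{n-(j-i)}` (vector component `j - i`, since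
component `t` of the vector is the coefficient `a_{n-t}`) when `0 ≤ j - i ≤ n`, else `0`.
The number of columns is passed explicitly (intended: `N = k + n`). -/
def toep {R : Type*} [Semiring R] (k N n : ℕ) (a : Fin (n + 1) → R) :
    Matrix (Fin k) (Fin N) R :=
  Matrix.of fun i j =>
    if h : i.val ≤ j.val ∧ j.val - i.val ≤ n then a ⟨j.val - i.val, by omega⟩ else 0

/-- Hankel matrix `H_q(y) ∈ R^{(N-q) × (q+1)}` with entries `(H_q(y))_{i,j} = y_{i+j}` (0-based). -/
def hank {R : Type*} [Semiring R] (N q : ℕ) (y : Fin N → R) :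
    Matrix (Fin (N - q)) (Fin (q + 1)) R :=
  Matrix.of fun i j => y ⟨i.val + j.val, by have hi := i.isLt; have hj := j.isLt; omega⟩

/-- Convolution of coefficient vectors: `(c ⋆ b)_k = Σ_{i+j=k} c_i b_j`. -/
def convVec {R : Type*} [Semiring R] (m q : ℕ) (c : Fin (m + 1) → R) (b : Fin (q + 1) → R) :
    Fin (m + q + 1) → R :=
  fun k => ∑ i : Fin (m + 1), ∑ j : Fin (q + 1), if i.val + j.val = k.val then c i * b j else 0

open Polynomial

section

variable {R : Type*} [Semiring R]

noncomputable def ofFinVec {k : ℕ} (x : Fin k → R) : R[X] :=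
  ∑ i : Fin k, monomial (i : ℕ) (x i)

theorem coeff_ofFinVec {k : ℕ} (x : Fin k → R) (i : Fin k) : (ofFinVec x).coeff i = x i := by
  simp [ofFinVec, finsetSum_coeff, coeff_monomial, Fin.val_inj]

theorem ofFinVec_injective {k : ℕ} : Function.Injective (ofFinVec : (Fin k → R) → R[X]) :=
  fun x y h => funext fun i => by rw [← coeff_ofFinVec x, h, coeff_ofFinVec]

@[simp]
theorem ofFinVec_zero {k : ℕ} : ofFinVec (0 : Fin k → R) = 0 := by
  simp [ofFinVec]

theorem ofFinVec_eq_zero {k : ℕ} {x : Fin k → R} : ofFinVec x = 0 ↔ x = 0 :=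
  ofFinVec_injective.eq_iff' ofFinVec_zero

theorem coeff_ofFinVec_mul_ofFinVec {k l : ℕ} (x : Fin k → R) (y : Fin l → R) (j : ℕ) :
    (ofFinVec x * ofFinVec y).coeff j =
      ∑ i, ∑ t, if i.val + t.val = j then x i * y t else 0 := by
  simp only [ofFinVec, Finset.sum_mul_sum, monomial_mul_monomial, finsetSum_coeff,
    coeff_monomial]

theorem coeff_ofFinVec_mul_ofFinVec_eq_zero {k l : ℕ} (x : Fin k → R) (y : Fin l → R)
    {j : ℕ} (hj : ∀ (i : Fin k) (t : Fin l), i.val + t.val ≠ j) :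
    (ofFinVec x * ofFinVec y).coeff j = 0 := by
  rw [coeff_ofFinVec_mul_ofFinVec]
  exact Finset.sum_eq_zero fun i _ => Finset.sum_eq_zero fun t _ => if_neg (hj i t)

theorem convVec_apply_eq_coeff (m q : ℕ) (c : Fin (m + 1) → R) (b : Fin (q + 1) → R)
    (k : Fin (m + q + 1)) : convVec m q c b k = (ofFinVec c * ofFinVec b).coeff k :=
  (coeff_ofFinVec_mul_ofFinVec c b k).symm

theorem toep_apply_eq_sum (k N n : ℕ) (a : Fin (n + 1) → R) (i : Fin k) (j : Fin N) :
    toep k N n a i j = ∑ t : Fin (n + 1), if i.val + t.val = j.val then a t else 0 := by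
  by_cases h : i.val ≤ j.val ∧ j.val - i.val ≤ n
  · rw [toep, of_apply, dif_pos h, Finset.sum_eq_single_of_mem ⟨j.val - i.val, by omega⟩
      (Finset.mem_univ _) fun t _ ht => if_neg fun hij => ht (Fin.ext (by simp; omega)),
      if_pos (by simp; omega)]
  · rw [toep, of_apply, dif_neg h]
    exact (Finset.sum_eq_zero fun t _ => if_neg (by omega)).symm

theorem vecMul_toep_apply (k N n : ℕ) (a : Fin (n + 1) → R) (v : Fin k → R) (j : Fin N) :
    (v ᵥ* toep k N n a) j = (ofFinVec v * ofFinVec a).coeff j := by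
  simp only [vecMul, dotProduct, toep_apply_eq_sum, Finset.mul_sum, mul_ite, mul_zero,
    coeff_ofFinVec_mul_ofFinVec]

variable [NoZeroDivisors R]

theorem convVec_ne_zero (m q : ℕ) {c : Fin (m + 1) → R} {b : Fin (q + 1) → R}
    (hc : c ≠ 0) (hb : b ≠ 0) : convVec m q c b ≠ 0 := by
  intro h
  have hcb : ofFinVec c * ofFinVec b = 0 := by
    ext j
    by_cases hj : j < m + q + 1
    · simpa only [convVec_apply_eq_coeff, Pi.zero_apply, coeff_zero] using congrFun h ⟨j, hj⟩
    · exact coeff_ofFinVec_mul_ofFinVec_eq_zero c b fun i t => by omega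
  exact mul_ne_zero (ofFinVec_eq_zero.not.mpr hc) (ofFinVec_eq_zero.not.mpr hb) hcb

theorem eq_zero_of_vecMul_toep_eq_zero (N n : ℕ) {a : Fin (n + 1) → R} (ha : a ≠ 0)
    {v : Fin (N - n) → R} (hv : v ᵥ* toep (N - n) N n a = 0) : v = 0 := by
  have hva : ofFinVec v * ofFinVec a = 0 := by
    ext j
    by_cases hj : j < N
    · simpa only [vecMul_toep_apply, Pi.zero_apply, coeff_zero] using congrFun hv ⟨j, hj⟩
    · exact coeff_ofFinVec_mul_ofFinVec_eq_zero v a fun i t => by omega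
  exact ofFinVec_eq_zero.mp ((mul_eq_zero.mp hva).resolve_right (ofFinVec_eq_zero.not.mpr ha))

end

section

variable {R : Type*} [Ring R] [NoZeroDivisors R]

theorem vecMul_toep_injective (N n : ℕ) {a : Fin (n + 1) → R} (ha : a ≠ 0) :
    Function.Injective fun v : Fin (N - n) → R => v ᵥ* toep (N - n) N n a := fun v w hvw =>
  sub_eq_zero.mp <| eq_zero_of_vecMul_toep_eq_zero N n ha <| by
    rw [sub_vecMul, sub_eq_zero]; exact hvw

end

theorem rank_mul_transpose_mul_transpose_of_injective {R : Type*} [Field R] [LinearOrder R]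
    [IsStrictOrderedRing R] {k l n : Type*} [Fintype k] [Fintype l] [Fintype n]
    {A : Matrix k n R} {B : Matrix l k R} (hA : Function.Injective fun x => x ᵥ* A)
    (hB : Function.Injective fun x => x ᵥ* B) : (A * Aᵀ * Bᵀ).rank = Fintype.card l := by
  have hBt : Function.Injective Bᵀ.mulVecLin := fun x y h =>
    hB (by simpa only [mulVecLin_apply, mulVec_transpose] using h)
  have hAAt : Function.Injective (A * Aᵀ).mulVecLin := by
    rw [← LinearMap.ker_eq_bot, ← transpose_transpose A, transpose_transpose Aᵀ,
      ker_mulVecLin_transpose_mul_self, LinearMap.ker_eq_bot]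
    exact fun x y h => hA (by simpa only [mulVecLin_apply, mulVec_transpose] using h)
  have hinj : Function.Injective ((A * Aᵀ).mulVecLin ∘ₗ Bᵀ.mulVecLin) := by
    rw [LinearMap.coe_comp]
    exact hAAt.comp hBt
  rw [rank, mulVecLin_mul, LinearMap.finrank_range_of_inj hinj,
    Module.finrank_fintype_fun_eq_card]

theorem stmt11_general (N m q : ℕ)
    (b : Fin (q + 1) → ℝ) (c : Fin (m + 1) → ℝ) (hb : b ≠ 0) (hc : c ≠ 0) :
    (toep (N - (m + q)) N (m + q) (convVec m q c b) *
      (toep (N - (m + q)) N (m + q) (convVec m q c b))ᵀ *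
      (toep (N - (m + 2 * q)) (N - (m + q)) q b)ᵀ).rank = N - (m + 2 * q) := by
  have hA := vecMul_toep_injective N (m + q) (convVec_ne_zero m q hc hb)
  have hB := vecMul_toep_injective (N - (m + q)) q hb
  rw [show N - (m + 2 * q) = N - (m + q) - q by omega]
  rw [rank_mul_transpose_mul_transpose_of_injective hA hB, Fintype.card_fin]

/-- For nonzero `b` and `c` with `a = c ⋆ b` (and `n = m + q`), the matrix
`T_{N-n}(a) T_{N-n}(a)ᵀ T_{N-2n+m}(b)ᵀ` has full column rank `N - 2n + m`. -/
theorem stmt11 (N m q : ℕ) (hq : 1 ≤ q) (hN : m + 2 * q < N)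
    (b : Fin (q + 1) → ℝ) (c : Fin (m + 1) → ℝ) (hb : b ≠ 0) (hc : c ≠ 0) :
    (toep (N - (m + q)) N (m + q) (convVec m q c b) *
      (toep (N - (m + q)) N (m + q) (convVec m q c b))ᵀ *
      (toep (N - (m + 2 * q)) (N - (m + q)) q b)ᵀ).rank = N - (m + 2 * q) :=
  stmt11_general N m q b c hb hc
end

section
/- Let N, n, m, q be natural numbers with n = m + q, q ≥ 1 and N > 2n − m. Let b ∈ ℝ^{q+1}, c ∈ ℝ^{m+1}, set a = c ⋆ b ∈ ℝ^{n+1}, and let ŷ ∈ ℝ^N satisfy T_{N−n}(a) ŷ = 0. Then the entire left factor annihilates the filtered Hankel matrix: T_{N−2n+m}(b) T_{N−n}(c) H_q(ŷ) = 0, where T_{N−n}(c) H_q(ŷ) ∈ ℝ^{(N−n)×(q+1)}. -/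
open Matrix

/-!
`T(a)` acts on a vector as the polynomial `a(z)` acts on a sequence by the shift `z`, so
Toeplitz matrices multiply like their polynomials: `T(b) T(c) = T(c ⋆ b)`. Moreover, row `i` of
`T(a) H_q(ŷ)`, read column by column, consists of the entries `i, …, i + q` of `T(a) ŷ`. Hence
`T(b) T(c) H_q(ŷ) = T(c ⋆ b) H_q(ŷ)` vanishes as soon as `T(c ⋆ b) ŷ = 0`.
-/

section Toeplitz

variable {R : Type*}

lemma toep_mulVec_apply [Semiring R] {k N n : ℕ} (hkN : k + n ≤ N) (a : Fin (n + 1) → R)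
    (v : Fin N → R) (i : Fin k) :
    (toep k N n a *ᵥ v) i = ∑ t : Fin (n + 1), a t * v ⟨i + t, by omega⟩ := by
  refine (Fintype.sum_of_injective (fun t : Fin (n + 1) => (⟨i + t, by omega⟩ : Fin N))
    (fun s t h => Fin.ext (by simpa using h)) _ (fun u => toep k N n a i u * v u) ?_ ?_).symm
  · intro u hu
    have hband : ¬ (i.val ≤ u.val ∧ u.val - i.val ≤ n) := fun h =>
      hu ⟨⟨u - i, by omega⟩, Fin.ext (by simp; omega)⟩
    simp only [toep, of_apply, dif_neg hband, zero_mul]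
  · intro t
    have hband : i.val ≤ i.val + t.val ∧ i.val + t.val - i.val ≤ n := by omega
    simp only [toep, of_apply, dif_pos hband]
    congr 2
    simp

lemma toep_mul_apply [Semiring R] {k N n P : ℕ} (hkN : k + n ≤ N) (a : Fin (n + 1) → R)
    (M : Matrix (Fin N) (Fin P) R) (i : Fin k) (j : Fin P) :
    (toep k N n a * M) i j = ∑ t : Fin (n + 1), a t * M ⟨i + t, by omega⟩ j :=
  toep_mulVec_apply hkN a (fun u => M u j) i

lemma sum_convVec_mul [Semiring R] (m q : ℕ) (c : Fin (m + 1) → R) (b : Fin (q + 1) → R)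
    (Y : ℕ → R) :
    ∑ t : Fin (m + q + 1), convVec m q c b t * Y t =
      ∑ p : Fin (m + 1), ∑ r : Fin (q + 1), c p * b r * Y (p + r) := by
  simp only [convVec, Finset.sum_mul, ite_mul, zero_mul]
  rw [Finset.sum_comm]
  refine Finset.sum_congr rfl fun p _ => ?_
  rw [Finset.sum_comm]
  refine Finset.sum_congr rfl fun r _ => ?_
  rw [Fintype.sum_eq_single ⟨p + r, by omega⟩ fun t ht => if_neg fun h => ht (Fin.ext h.symm)]
  exact if_pos rfl

lemma toep_mulVec_toep_mulVec [CommSemiring R] {k K L m q : ℕ} (hk : k + q ≤ K)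
    (hK : K + m ≤ L) (b : Fin (q + 1) → R) (c : Fin (m + 1) → R) (v : Fin L → R) :
    toep k K q b *ᵥ (toep K L m c *ᵥ v) = toep k L (m + q) (convVec m q c b) *ᵥ v := by
  ext i
  -- extending `v` by zero lets the shifted indices live in `ℕ`
  set z : ℕ → R := fun u => if h : u < L then v ⟨u, h⟩ else 0
  have hz : ∀ u (h : u < L), v ⟨u, h⟩ = z u := fun u h => by simp [z, h]
  simp only [toep_mulVec_apply hk, toep_mulVec_apply hK,
    toep_mulVec_apply (by omega : k + (m + q) ≤ L), hz]
  rw [sum_convVec_mul m q c b fun u => z (i + u), Finset.sum_comm]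
  simp only [Finset.mul_sum]
  refine Finset.sum_congr rfl fun r _ => Finset.sum_congr rfl fun p _ => ?_
  rw [show (i : ℕ) + r + p = i + (p + r) by omega]
  ring

theorem toep_mul_toep [CommSemiring R] {k K L m q : ℕ} (hk : k + q ≤ K) (hK : K + m ≤ L)
    (b : Fin (q + 1) → R) (c : Fin (m + 1) → R) :
    toep k K q b * toep K L m c = toep k L (m + q) (convVec m q c b) :=
  ext_iff_mulVec.mpr fun v => by
    rw [← mulVec_mulVec, toep_mulVec_toep_mulVec hk hK]

lemma toep_mul_hank_apply [Semiring R] {k K N n q : ℕ} (hk : k + q ≤ K) (hK : K + n ≤ N)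
    (a : Fin (n + 1) → R) (y : Fin N → R) (i : Fin k) (j : Fin (q + 1)) :
    (toep k (N - q) n a * hank N q y) i j = (toep K N n a *ᵥ y) ⟨i + j, by omega⟩ := by
  rw [toep_mul_apply (by omega), toep_mulVec_apply hK]
  refine Finset.sum_congr rfl fun t _ => ?_
  simp only [hank, of_apply]
  congr 2
  simp only [Fin.mk.injEq]
  omega

theorem toep_mul_hank_eq_zero [Semiring R] {k K N n q : ℕ} (hk : k + q ≤ K) (hK : K + n ≤ N)
    (a : Fin (n + 1) → R) (y : Fin N → R) (hy : toep K N n a *ᵥ y = 0) :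
    toep k (N - q) n a * hank N q y = 0 := by
  ext i j
  rw [toep_mul_hank_apply hk hK, hy, Pi.zero_apply, Matrix.zero_apply]

end Toeplitz

theorem stmt12_general (N m q : ℕ) (hN : m + 2 * q < N)
    (b : Fin (q + 1) → ℝ) (c : Fin (m + 1) → ℝ) (yhat : Fin N → ℝ)
    (hy : toep (N - (m + q)) N (m + q) (convVec m q c b) *ᵥ yhat = 0) :
    toep (N - (m + 2 * q)) (N - (m + q)) q b *
      (toep (N - (m + q)) (N - q) m c * hank N q yhat) = 0 := by
  rw [← Matrix.mul_assoc, toep_mul_toep (by omega) (by omega)]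
  exact toep_mul_hank_eq_zero (by omega) (by omega) _ _ hy

/-- If `ŷ` is model-compliant, `T_{N-n}(a) ŷ = 0` with `a = c ⋆ b`, then the whole left
factor annihilates the filtered Hankel matrix: `T_{N-2n+m}(b) T_{N-n}(c) H_q(ŷ) = 0`. -/
theorem stmt12 (N m q : ℕ) (hq : 1 ≤ q) (hN : m + 2 * q < N)
    (b : Fin (q + 1) → ℝ) (c : Fin (m + 1) → ℝ) (yhat : Fin N → ℝ)
    (hy : toep (N - (m + q)) N (m + q) (convVec m q c b) *ᵥ yhat = 0) :
    toep (N - (m + 2 * q)) (N - (m + q)) q b *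
      (toep (N - (m + q)) (N - q) m c * hank N q yhat) = 0 :=
  stmt12_general N m q hN b c yhat hy
end
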